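/- arXiv:2301.03566 — 4 statements merged into one kernel-verified Lean document; each statement's English description precedes it below -/
import Mathlib

section
/- Let γ, ν ∈ ℝ^ℓ be nonnegative vectors, and let p, q be distributions on [k] with p_i + q_i > 0 for all i. Let A := {(Tp, Tq) : T ∈ J^{γ,ν}_{ℓ,k}}. If T ∈ J^{γ,ν}_{ℓ,k} and (Tp, Tq) is an extreme point of A, then, with ℓ' := 2ℓ², there exist a threshold channel T₁ ∈ T^thresh_{ℓ',k} for (p,q) and an extreme point T₂ of the convex set J^{γ,ν}_{ℓ,ℓ'} such that (Tp, Tq) = ((T₂·T₁)p, (T₂·T₁)q), where T₂·T₁ denotes the matrix product. -/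
open scoped Classical ENNReal
open Finset

noncomputable section

/-- `p` is a probability distribution on `Fin k`. -/
def IsDist {k : ℕ} (p : Fin k → ℝ) : Prop :=
  (∀ i, 0 ≤ p i) ∧ ∑ i, p i = 1

/-- `T` is a channel from `[k]` to `[ℓ]`: nonnegative entries, columns sum to 1. -/
def IsChannel {ℓ k : ℕ} (T : Matrix (Fin ℓ) (Fin k) ℝ) : Prop :=
  (∀ r c, 0 ≤ T r c) ∧ ∀ c, ∑ r, T r c = 1

/-- Squared Hellinger divergence `d_h²(p,q) = Σ_i (√p_i − √q_i)²`. -/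
def hellingerSq {k : ℕ} (p q : Fin k → ℝ) : ℝ :=
  ∑ i, (Real.sqrt (p i) - Real.sqrt (q i)) ^ 2

/-- Total variation distance `d_TV(p,q) = (1/2) Σ_i |p_i − q_i|`. -/
def tvDist {k : ℕ} (p q : Fin k → ℝ) : ℝ :=
  (1 / 2) * ∑ i, |p i - q i|

/-- `T` is an `ε`-LDP channel: `T(r,c) ≤ e^ε T(r,c')` for all rows `r`, columns `c, c'`. -/
def IsLDP {ℓ k : ℕ} (ε : ℝ) (T : Matrix (Fin ℓ) (Fin k) ℝ) : Prop :=
  IsChannel T ∧ ∀ r c c', T r c ≤ Real.exp ε * T r c'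

/-- The deterministic channel induced by a map `f : [k] → [ℓ]`. -/
def detChannel {k ℓ : ℕ} (f : Fin k → Fin ℓ) : Matrix (Fin ℓ) (Fin k) ℝ :=
  fun r c => if r = f c then 1 else 0

/-- Likelihood ratio `p_i / q_i`, taken to be `+∞` when `q_i = 0`. -/
def lr {k : ℕ} (p q : Fin k → ℝ) (i : Fin k) : EReal :=
  if q i = 0 then ⊤ else ((p i / q i : ℝ) : EReal)

/-- `T` is a threshold channel for `(p, q)`: it is deterministic, induced by a map `f`,
and whenever `p_u/q_u < p_v/q_v` and `f u = f v`, every `w` whose likelihood ratio lies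
strictly between those of `u` and `v` satisfies `f w = f u`. -/
def IsThresholdChannel {k ℓ : ℕ} (p q : Fin k → ℝ) (T : Matrix (Fin ℓ) (Fin k) ℝ) : Prop :=
  ∃ f : Fin k → Fin ℓ, T = detChannel f ∧
    ∀ u v w : Fin k, lr p q u < lr p q v → f u = f v →
      lr p q u < lr p q w → lr p q w < lr p q v → f w = f u

/-- The LP family of channels `J^{γ,ν}_{ℓ,k}`:
channels `T` with `T(j,i) ≤ γ_j T(j,i') + ν_j` for all rows `j` and columns `i, i'`. -/
def IsLP {ℓ k : ℕ} (γ ν : Fin ℓ → ℝ) (T : Matrix (Fin ℓ) (Fin k) ℝ) : Prop :=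
  IsChannel T ∧ ∀ (j : Fin ℓ) (i i' : Fin k), T j i ≤ γ j * T j i' + ν j

/-- Minimum entry of row `r` of `T`. -/
def rowMin {ℓ k : ℕ} (T : Matrix (Fin ℓ) (Fin k) ℝ) (r : Fin ℓ) : ℝ :=
  sInf (Set.range fun c => T r c)

/-- Maximum entry of row `r` of `T`. -/
def rowMax {ℓ k : ℕ} (T : Matrix (Fin ℓ) (Fin k) ℝ) (r : Fin ℓ) : ℝ :=
  sSup (Set.range fun c => T r c)

/-- The entry `T(r,c)` is min-tight: `T(r,c) = m_r` and `M_r = γ_r m_r + ν_r`. -/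
def MinTight {ℓ k : ℕ} (γ ν : Fin ℓ → ℝ) (T : Matrix (Fin ℓ) (Fin k) ℝ)
    (r : Fin ℓ) (c : Fin k) : Prop :=
  T r c = rowMin T r ∧ rowMax T r = γ r * rowMin T r + ν r

/-- The entry `T(r,c)` is max-tight: `T(r,c) = M_r` and `M_r = γ_r m_r + ν_r`. -/
def MaxTight {ℓ k : ℕ} (γ ν : Fin ℓ → ℝ) (T : Matrix (Fin ℓ) (Fin k) ℝ)
    (r : Fin ℓ) (c : Fin k) : Prop :=
  T r c = rowMax T r ∧ rowMax T r = γ r * rowMin T r + ν r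

/-!
The joint range `A` is the image of the polytope `J^{γ,ν}_{ℓ,k}` under `S ↦ (S p, S q)`.
Maximise a linear functional `(a, b)` over it and fix a maximiser `W`. Once the row minima
of `W` are frozen, the LP constraints decouple into one box-simplex per column, and column `i`
solves the linear program with cost `p_i a + q_i b`. Optimality on a box-simplex is certified
greedily, so it only depends on the sign pattern of the cost differences, i.e. on which of
`ℓ²` half-planes contain `(p_i, q_i)`. Each half-plane is an up- or a down-set for the
likelihood-ratio order, so summing the suitably oriented indicators gives a monotone rank with
at most `ℓ²` values. Merging the inputs of equal rank is a threshold channel into `[2ℓ²]`, and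
copying one optimal column per class gives an LP channel after it that is still optimal.

Hence `A` is the convex hull of the compact convex images of these factorisations (by
Hahn–Banach), so an extreme point of `A` is one of them; finally an extreme point of the
fibre over it (Krein–Milman) is already an extreme point of `J^{γ,ν}_{ℓ,2ℓ²}`.
-/

open scoped Matrix

section LikelihoodRatio

variable {k : ℕ} {p q : Fin k → ℝ}

theorem lr_le_iff (hq : ∀ i, 0 ≤ q i) (hpq : ∀ i, 0 < p i + q i) (u v : Fin k) :
    lr p q u ≤ lr p q v ↔ p u * q v ≤ p v * q u := by
  unfold lr
  rcases (hq u).eq_or_lt with hqu | hqu <;> rcases (hq v).eq_or_lt with hqv | hqv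
  · simp [← hqu, ← hqv]
  · have hpu := hpq u
    simp only [← hqu, if_true, hqv.ne', if_false, top_le_iff, EReal.coe_ne_top, false_iff, not_le]
    nlinarith
  · have hpv := hpq v
    simp only [← hqv, if_true, hqu.ne', if_false, le_top, true_iff]
    nlinarith
  · simp only [hqu.ne', hqv.ne', if_false, EReal.coe_le_coe_iff, div_le_div_iff₀ hqu hqv]

theorem lr_swap_le_iff (hp : ∀ i, 0 ≤ p i) (hq : ∀ i, 0 ≤ q i) (hpq : ∀ i, 0 < p i + q i)
    (u v : Fin k) : lr q p v ≤ lr q p u ↔ lr p q u ≤ lr p q v := by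
  rw [lr_le_iff hp (fun i => by linarith [hpq i]), lr_le_iff hq hpq, mul_comm, mul_comm (q u)]

def LRUpClosed (p q : Fin k → ℝ) (s : Fin k → Prop) : Prop :=
  ∀ ⦃u v⦄, lr p q u ≤ lr p q v → s u → s v

theorem lrUpClosed_halfplane (hq : ∀ i, 0 ≤ q i) (hpq : ∀ i, 0 < p i + q i) {α β : ℝ}
    (hα : 0 ≤ α) (hβ : β ≤ 0) :
    LRUpClosed p q fun i => 0 < α * p i + β * q i := by
  intro u v huv hu
  rw [lr_le_iff hq hpq] at huv
  have hpu : 0 < p u := by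
    by_contra! h
    nlinarith [mul_nonpos_of_nonpos_of_nonneg hβ (hq u), mul_nonpos_of_nonneg_of_nonpos hα h]
  have hpv : 0 < p v := by
    by_contra! h
    have hqv : 0 < q v := by linarith [hpq v]
    nlinarith [mul_pos hpu hqv, mul_nonpos_of_nonpos_of_nonneg h (hq u)]
  -- `p u (α p v + β q v) ≥ p v (α p u + β q u)` since `β ≤ 0` and `p u q v ≤ p v q u`
  nlinarith [mul_le_mul_of_nonpos_left huv hβ, mul_pos hpv hu]

theorem lrUpClosed_halfplane_or_compl (hp : ∀ i, 0 ≤ p i) (hq : ∀ i, 0 ≤ q i)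
    (hpq : ∀ i, 0 < p i + q i) (α β : ℝ) :
    LRUpClosed p q (fun i => 0 < α * p i + β * q i) ∨
      LRUpClosed p q (fun i => ¬ 0 < α * p i + β * q i) := by
  by_cases h₁ : 0 ≤ α ∧ β ≤ 0
  · exact .inl (lrUpClosed_halfplane hq hpq h₁.1 h₁.2)
  by_cases h₂ : α ≤ 0 ∧ 0 ≤ β
  · refine .inr fun u v huv hu hv => hu ?_
    have hqp := lrUpClosed_halfplane (p := q) hp (fun i => by linarith [hpq i]) h₂.2 h₂.1
    have := hqp ((lr_swap_le_iff hp hq hpq u v).2 huv) (by linarith)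
    linarith
  · left
    intro u v _ hu
    rcases lt_or_ge α 0 with hα | hα
    · have hβ : β < 0 := by by_contra!; exact h₂ ⟨hα.le, this⟩
      nlinarith [mul_nonpos_of_nonpos_of_nonneg hα.le (hp u),
        mul_nonpos_of_nonpos_of_nonneg hβ.le (hq u)]
    · have hβ : 0 < β := by by_contra!; exact h₁ ⟨hα, this⟩
      have hα' : 0 < α := hα.lt_of_ne fun h => h₂ ⟨h.symm.le, hβ.le⟩
      nlinarith [hpq v, hp v, hq v, mul_nonneg hα'.le (hp v), mul_nonneg hβ.le (hq v),
        mul_pos (lt_min hα' hβ) (hpq v), min_le_left α β, min_le_right α β]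

-- the indicator of `s` if `s` is up-closed, of its complement otherwise
def orientedIndicator (p q : Fin k → ℝ) (s : Fin k → Prop) (i : Fin k) : ℕ :=
  if (s i ↔ LRUpClosed p q s) then 1 else 0

theorem orientedIndicator_le_one (s : Fin k → Prop) (i : Fin k) :
    orientedIndicator p q s i ≤ 1 := by
  unfold orientedIndicator; split_ifs <;> omega

theorem orientedIndicator_mono {s : Fin k → Prop}
    (hs : LRUpClosed p q s ∨ LRUpClosed p q (¬ s ·)) {u v : Fin k}
    (huv : lr p q u ≤ lr p q v) : orientedIndicator p q s u ≤ orientedIndicator p q s v := by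
  unfold orientedIndicator
  by_cases hup : LRUpClosed p q s
  · have := hup huv
    split_ifs <;> tauto
  · have := hs.resolve_left hup huv
    split_ifs <;> tauto

theorem iff_of_orientedIndicator_eq {s : Fin k → Prop} {u v : Fin k}
    (h : orientedIndicator p q s u = orientedIndicator p q s v) : s u ↔ s v := by
  unfold orientedIndicator at h
  split_ifs at h <;> tauto

variable {ι : Type*} [Fintype ι]

def lrRank (p q : Fin k → ℝ) (s : ι → Fin k → Prop) (i : Fin k) : ℕ :=
  ∑ t, orientedIndicator p q (s t) i

theorem lrRank_le_card (s : ι → Fin k → Prop) (i : Fin k) :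
    lrRank p q s i ≤ Fintype.card ι := by
  simpa [lrRank] using Finset.sum_le_sum fun t (_ : t ∈ univ) =>
    orientedIndicator_le_one (p := p) (q := q) (s t) i

theorem lrRank_mono {s : ι → Fin k → Prop}
    (hs : ∀ t, LRUpClosed p q (s t) ∨ LRUpClosed p q (¬ s t ·)) {u v : Fin k}
    (huv : lr p q u ≤ lr p q v) : lrRank p q s u ≤ lrRank p q s v :=
  Finset.sum_le_sum fun t _ => orientedIndicator_mono (hs t) huv

theorem iff_of_lrRank_eq {s : ι → Fin k → Prop}
    (hs : ∀ t, LRUpClosed p q (s t) ∨ LRUpClosed p q (¬ s t ·)) {u v : Fin k}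
    (h : lrRank p q s u = lrRank p q s v) (t : ι) : s t u ↔ s t v := by
  wlog huv : lr p q u ≤ lr p q v generalizing u v
  · exact (this h.symm (le_of_not_ge huv)).symm
  refine iff_of_orientedIndicator_eq (p := p) (q := q) ?_
  exact (Finset.sum_eq_sum_iff_of_le fun t _ => orientedIndicator_mono (hs t) huv).1 h t
    (mem_univ t)

theorem isThresholdChannel_detChannel_of_monotone {N : ℕ} (f : Fin k → Fin N)
    (hf : ∀ u v, lr p q u ≤ lr p q v → f u ≤ f v) : IsThresholdChannel p q (detChannel f) :=
  ⟨f, rfl, fun _ _ _ _ huv huw hwv => le_antisymm (huv ▸ hf _ _ hwv.le) (hf _ _ huw.le)⟩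

end LikelihoodRatio

section BoxSimplex

variable {n : Type*} [Fintype n]

def boxSimplex (lb ub : n → ℝ) : Set (n → ℝ) :=
  {x | lb ≤ x ∧ x ≤ ub ∧ ∑ j, x j = 1}

def IsGreedy (lb ub c x : n → ℝ) : Prop :=
  ∀ j j', c j' < c j → x j = ub j ∨ x j' = lb j'

variable {lb ub c x : n → ℝ}

theorem isGreedy_of_isMaxOn (hx : x ∈ boxSimplex lb ub)
    (hmax : IsMaxOn (c ⬝ᵥ ·) (boxSimplex lb ub) x) : IsGreedy lb ub c x := by
  intro j j' hc
  by_contra! hne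
  have hjj' : j ≠ j' := by rintro rfl; exact lt_irrefl _ hc
  have hj : x j < ub j := (hx.2.1 j).lt_of_ne hne.1
  have hj' : lb j' < x j' := (hx.1 j').lt_of_ne hne.2.symm
  -- move mass `ε` from coordinate `j'` to coordinate `j`
  set ε := min (ub j - x j) (x j' - lb j')
  have hε : 0 < ε := lt_min (by linarith) (by linarith)
  set y : n → ℝ := x + Pi.single j ε - Pi.single j' ε
  have hy : y ∈ boxSimplex lb ub := by
    have hεj : ε ≤ ub j - x j := min_le_left _ _
    have hεj' : ε ≤ x j' - lb j' := min_le_right _ _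
    have hyt : ∀ t, y t =
        x t + (if t = j then ε else 0) - (if t = j' then ε else 0) := by
      intro t; simp [y, Pi.single_apply]
    refine ⟨fun t => ?_, fun t => ?_, by simp [y, Finset.sum_add_distrib, hx.2.2]⟩ <;>
    · rw [hyt]
      have := hx.1 t; have := hx.2.1 t
      split_ifs <;> subst_vars <;> linarith
  have : c ⬝ᵥ y ≤ c ⬝ᵥ x := hmax hy
  simp only [y, dotProduct_sub, dotProduct_add, dotProduct_single] at this
  nlinarith

theorem isMaxOn_of_isGreedy (hx : x ∈ boxSimplex lb ub) (hg : IsGreedy lb ub c x) :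
    IsMaxOn (c ⬝ᵥ ·) (boxSimplex lb ub) x := by
  intro y hy
  set d := y - x
  have hd : ∑ j, d j = 0 := by simp [d, Finset.sum_sub_distrib, hx.2.2, hy.2.2]
  suffices c ⬝ᵥ d ≤ 0 by simpa [d, dotProduct_sub] using this
  by_cases hpos : ∃ j, 0 < d j
  · obtain ⟨j₀, hj₀, hmax⟩ :=
      Finset.exists_max_image {j | 0 < d j} c (by simpa [Finset.Nonempty] using hpos)
    rw [Finset.mem_filter] at hj₀
    -- every coordinate that loses mass has cost at least `c j₀`, every one that gains at most
    have hterm : ∀ j, c j * d j ≤ c j₀ * d j := by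
      intro j
      rcases lt_or_ge (d j) 0 with hj | hj
      · have : c j₀ ≤ c j := by
          by_contra! hlt
          rcases hg j₀ j hlt with h | h
          · linarith [hy.2.1 j₀, hj₀.2, show d j₀ = y j₀ - x j₀ from rfl]
          · linarith [hy.1 j, show d j = y j - x j from rfl]
        nlinarith
      · rcases hj.lt_or_eq with hj | hj
        · nlinarith [hmax j (by simp [hj])]
        · simp [← hj]
    calc c ⬝ᵥ d ≤ ∑ j, c j₀ * d j := Finset.sum_le_sum fun j _ => hterm j
      _ = 0 := by rw [← Finset.mul_sum, hd, mul_zero]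
  · push Not at hpos
    have hzero := (Finset.sum_eq_zero_iff_of_nonpos fun j _ => hpos j).1 hd
    simp [dotProduct, hzero]

theorem IsMaxOn.boxSimplex_of_lt_imp_lt {c' : n → ℝ} (hx : x ∈ boxSimplex lb ub)
    (hmax : IsMaxOn (c ⬝ᵥ ·) (boxSimplex lb ub) x) (hcc' : ∀ j j', c' j' < c' j → c j' < c j) :
    IsMaxOn (c' ⬝ᵥ ·) (boxSimplex lb ub) x :=
  isMaxOn_of_isGreedy hx fun j j' h => isGreedy_of_isMaxOn hx hmax j j' (hcc' j j' h)

end BoxSimplex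

section LPFamily

variable {ℓ m n : ℕ} {γ ν : Fin ℓ → ℝ}

theorem mul_detChannel_apply (S : Matrix (Fin ℓ) (Fin m) ℝ) (f : Fin n → Fin m)
    (j : Fin ℓ) (i : Fin n) : (S * detChannel f) j i = S j (f i) := by
  simp [Matrix.mul_apply, detChannel]

theorem IsLP.mul_detChannel {S : Matrix (Fin ℓ) (Fin m) ℝ} (hS : IsLP γ ν S)
    (f : Fin n → Fin m) : IsLP γ ν (S * detChannel f) := by
  simp only [IsLP, IsChannel, mul_detChannel_apply]
  exact ⟨⟨fun r c => hS.1.1 r (f c), fun c => hS.1.2 (f c)⟩, fun j i i' => hS.2 j (f i) (f i')⟩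

theorem convex_setOf_isLP : Convex ℝ {S : Matrix (Fin ℓ) (Fin m) ℝ | IsLP γ ν S} := by
  rintro S ⟨⟨hS₀, hS₁⟩, hS⟩ S' ⟨⟨hS'₀, hS'₁⟩, hS'⟩ a b ha hb hab
  refine ⟨⟨fun r c => ?_, fun c => ?_⟩, fun j i i' => ?_⟩ <;>
    simp only [Matrix.add_apply, Matrix.smul_apply, smul_eq_mul]
  · have := hS₀ r c; have := hS'₀ r c; positivity
  · rw [Finset.sum_add_distrib, ← Finset.mul_sum, ← Finset.mul_sum, hS₁, hS'₁]; linarith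
  · calc a * S j i + b * S' j i ≤ a * (γ j * S j i' + ν j) + b * (γ j * S' j i' + ν j) := by
          gcongr; exacts [hS j i i', hS' j i i']
      _ = γ j * (a * S j i' + b * S' j i') + ν j := by
          linear_combination ν j * hab

theorem isClosed_setOf_isLP : IsClosed {S : Matrix (Fin ℓ) (Fin m) ℝ | IsLP γ ν S} := by
  have hentry (r : Fin ℓ) (c : Fin m) : Continuous fun S : Matrix (Fin ℓ) (Fin m) ℝ => S r c :=
    continuous_id.matrix_elem r c
  simp only [IsLP, IsChannel, Set.ofPred_and, Set.ofPred_forall]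
  refine ((isClosed_iInter fun r => isClosed_iInter fun c => ?_).inter
    (isClosed_iInter fun c => ?_)).inter
    (isClosed_iInter fun j => isClosed_iInter fun i => isClosed_iInter fun i' => ?_)
  · exact isClosed_le continuous_const (hentry r c)
  · exact isClosed_eq (continuous_finsetSum _ fun r _ => hentry r c) continuous_const
  · exact isClosed_le (hentry j i) ((continuous_const.mul (hentry j i')).add continuous_const)

theorem isCompact_setOf_isLP : IsCompact {S : Matrix (Fin ℓ) (Fin m) ℝ | IsLP γ ν S} := by
  have hbox := isCompact_univ_pi fun (_ : Fin ℓ) => isCompact_univ_pi fun (_ : Fin m) =>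
    isCompact_Icc (a := (0 : ℝ)) (b := 1)
  refine hbox.of_isClosed_subset isClosed_setOf_isLP fun S hS r _ c _ => ⟨hS.1.1 r c, ?_⟩
  calc S r c ≤ ∑ r', S r' c := Finset.single_le_sum (fun r' _ => hS.1.1 r' c) (mem_univ r)
    _ = 1 := hS.1.2 c

theorem IsLP.transpose_mem_boxSimplex [Nonempty (Fin m)] {W : Matrix (Fin ℓ) (Fin m) ℝ}
    (hW : IsLP γ ν W) (i : Fin m) :
    Wᵀ i ∈ boxSimplex (rowMin W) (fun j => γ j * rowMin W j + ν j) := by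
  have hmin (j : Fin ℓ) : ∃ i₀, W j i₀ = rowMin W j :=
    (Set.range_nonempty _).csInf_mem (Set.finite_range _)
  refine ⟨fun j => csInf_le (Set.finite_range _).bddBelow ⟨i, rfl⟩, fun j => ?_, hW.1.2 i⟩
  obtain ⟨i₀, hi₀⟩ := hmin j
  simpa [← hi₀] using hW.2 j i i₀

theorem isLP_of_forall_transpose_mem_boxSimplex (hγ : ∀ j, 0 ≤ γ j) {lb : Fin ℓ → ℝ}
    (hlb : 0 ≤ lb) {S : Matrix (Fin ℓ) (Fin m) ℝ}
    (hS : ∀ i, Sᵀ i ∈ boxSimplex lb (fun j => γ j * lb j + ν j)) : IsLP γ ν S := by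
  refine ⟨⟨fun r c => (hlb r).trans ((hS c).1 r), fun c => (hS c).2.2⟩, fun j i i' => ?_⟩
  calc S j i ≤ γ j * lb j + ν j := (hS i).2.1 j
    _ ≤ γ j * S j i' + ν j := by gcongr; exacts [hγ j, (hS i').1 j]

end LPFamily

section Optimization

theorem dotProduct_mulVec_add_dotProduct_mulVec {m n : Type*} [Fintype m] [Fintype n]
    (a b : m → ℝ) (p q : n → ℝ) (S : Matrix m n ℝ) :
    a ⬝ᵥ S *ᵥ p + b ⬝ᵥ S *ᵥ q = ∑ i, (p i • a + q i • b) ⬝ᵥ Sᵀ i := by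
  simp only [dotProduct, Matrix.mulVec, Finset.mul_sum, ← Finset.sum_add_distrib]
  rw [Finset.sum_comm]
  refine Finset.sum_congr rfl fun i _ => Finset.sum_congr rfl fun j _ => ?_
  simp only [Pi.add_apply, Pi.smul_apply, smul_eq_mul, Matrix.transpose_apply]
  ring

theorem isMaxOn_of_forall_sum_le {ι κ : Type*} [Fintype ι] {g : ι → κ → ℝ} {K : Set κ}
    {x : ι → κ} (hx : ∀ i, x i ∈ K)
    (h : ∀ y : ι → κ, (∀ i, y i ∈ K) → ∑ i, g i (y i) ≤ ∑ i, g i (x i)) (i : ι) :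
    IsMaxOn (g i) K (x i) := by
  intro z hz
  have := h (Function.update x i z) fun i' => by
    rcases eq_or_ne i' i with rfl | hi'
    · simpa using hz
    · simpa [hi'] using hx i'
  simp only [Function.apply_update (fun i => g i) x i z,
    Finset.sum_update_of_mem (mem_univ i),
    Finset.sum_eq_add_sum_sdiff_singleton_of_mem (mem_univ i) fun i => g i (x i)] at this
  exact le_of_add_le_add_right this

variable {k ℓ : ℕ} {γ ν : Fin ℓ → ℝ} {p q : Fin k → ℝ}

theorem exists_threshold_sign_pattern (hl : 0 < ℓ) (hp : ∀ i, 0 ≤ p i) (hq : ∀ i, 0 ≤ q i)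
    (hpq : ∀ i, 0 < p i + q i) (a b : Fin ℓ → ℝ) :
    ∃ f : Fin k → Fin (2 * ℓ ^ 2), IsThresholdChannel p q (detChannel f) ∧
      ∀ u v, f u = f v → ∀ j j',
        ((p u • a + q u • b) j' < (p u • a + q u • b) j ↔
          (p v • a + q v • b) j' < (p v • a + q v • b) j) := by
  set s : Fin ℓ × Fin ℓ → Fin k → Prop :=
    fun t i => 0 < (a t.1 - a t.2) * p i + (b t.1 - b t.2) * q i
  have hs (t : Fin ℓ × Fin ℓ) :=
    lrUpClosed_halfplane_or_compl hp hq hpq (a t.1 - a t.2) (b t.1 - b t.2)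
  have hrank (i : Fin k) : lrRank p q s i < 2 * ℓ ^ 2 := by
    have := lrRank_le_card (p := p) (q := q) s i
    simp only [Fintype.card_prod, Fintype.card_fin] at this
    nlinarith
  have hsign (i : Fin k) (j j' : Fin ℓ) :
      (p i • a + q i • b) j' < (p i • a + q i • b) j ↔ s (j, j') i := by
    simp only [s, Pi.add_apply, Pi.smul_apply, smul_eq_mul]
    constructor <;> intro <;> linarith
  refine ⟨fun i => ⟨lrRank p q s i, hrank i⟩,
    isThresholdChannel_detChannel_of_monotone _ fun u v huv => lrRank_mono hs huv,
    fun u v huv j j' => ?_⟩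
  rw [hsign, hsign]
  exact iff_of_lrRank_eq hs (congrArg Fin.val huv) (j, j')

theorem exists_threshold_objective_le (hk : 0 < k) (hl : 0 < ℓ) (hγ : ∀ j, 0 ≤ γ j)
    (hp : ∀ i, 0 ≤ p i) (hq : ∀ i, 0 ≤ q i) (hpq : ∀ i, 0 < p i + q i) (a b : Fin ℓ → ℝ)
    {S : Matrix (Fin ℓ) (Fin k) ℝ} (hS : IsLP γ ν S) :
    ∃ f : Fin k → Fin (2 * ℓ ^ 2), IsThresholdChannel p q (detChannel f) ∧
      ∃ S₂ : Matrix (Fin ℓ) (Fin (2 * ℓ ^ 2)) ℝ, IsLP γ ν S₂ ∧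
        a ⬝ᵥ S *ᵥ p + b ⬝ᵥ S *ᵥ q ≤
          a ⬝ᵥ (S₂ * detChannel f) *ᵥ p + b ⬝ᵥ (S₂ * detChannel f) *ᵥ q := by
  have : Nonempty (Fin k) := ⟨⟨0, hk⟩⟩
  set c : Fin k → Fin ℓ → ℝ := fun i => p i • a + q i • b
  simp only [dotProduct_mulVec_add_dotProduct_mulVec]
  obtain ⟨W, hW, hWmax⟩ := isCompact_setOf_isLP.exists_isMaxOn ⟨S, hS⟩
    (show Continuous fun S : Matrix (Fin ℓ) (Fin k) ℝ => ∑ i, c i ⬝ᵥ Sᵀ i by fun_prop).continuousOn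
  set box := boxSimplex (rowMin W) (fun j => γ j * rowMin W j + ν j)
  have hcol : ∀ i, Wᵀ i ∈ box := hW.transpose_mem_boxSimplex
  have hlb : 0 ≤ rowMin W := fun j =>
    le_csInf (Set.range_nonempty _) fun _ ⟨i, hi⟩ => hi ▸ hW.1.1 j i
  -- with the row minima frozen, the columns of `W` can be optimised independently
  have hcolmax : ∀ i, IsMaxOn (c i ⬝ᵥ ·) box (Wᵀ i) :=
    isMaxOn_of_forall_sum_le hcol fun y hy =>
      hWmax (isLP_of_forall_transpose_mem_boxSimplex hγ hlb (S := Matrix.of fun j i => y i j) hy)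
  obtain ⟨f, hf, hpattern⟩ := exists_threshold_sign_pattern hl hp hq hpq a b
  refine ⟨f, hf, W * detChannel (Function.invFun f), hW.mul_detChannel _, ?_⟩
  calc ∑ i, c i ⬝ᵥ Sᵀ i ≤ ∑ i, c i ⬝ᵥ Wᵀ i := hWmax hS
    _ ≤ ∑ i, c i ⬝ᵥ Wᵀ (Function.invFun f (f i)) := Finset.sum_le_sum fun i _ =>
        (hcolmax _).boxSimplex_of_lt_imp_lt (hcol _)
          (fun j j' => (hpattern _ _ (Function.invFun_eq ⟨i, rfl⟩) j j').2) (hcol i)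
    _ = _ := Finset.sum_congr rfl fun i _ => congrArg _ <| funext fun j => by
        simp only [Matrix.transpose_apply, mul_detChannel_apply]

end Optimization

section ConvexGeometry

variable {E F : Type*} [AddCommGroup E] [Module ℝ E] [AddCommGroup F] [Module ℝ F]

theorem extremePoints_inter_preimage_subset (L : E →ₗ[ℝ] F) {K : Set E} {A : Set F}
    (hKA : Set.MapsTo L K A) {z : F} (hz : z ∈ A.extremePoints ℝ) :
    (K ∩ L ⁻¹' {z}).extremePoints ℝ ⊆ K.extremePoints ℝ := by
  rintro x ⟨⟨hxK, hxz⟩, hx⟩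
  refine ⟨hxK, fun x₁ hx₁ x₂ hx₂ hseg => ?_⟩
  have hLseg : z ∈ openSegment ℝ (L x₁) (L x₂) := by
    rw [← show L x = z from hxz]
    simpa using (image_openSegment ℝ L.toAffineMap x₁ x₂).subset ⟨x, hseg, rfl⟩
  have h₁ := hz.2 (hKA hx₁) (hKA hx₂) hLseg
  have h₂ := hz.2 (hKA hx₂) (hKA hx₁) (openSegment_symm ℝ (L x₁) (L x₂) ▸ hLseg)
  exact hx ⟨hx₁, h₁⟩ ⟨hx₂, h₂⟩ hseg

theorem exists_dotProduct_eq {n : Type*} [Fintype n] (φ : (n → ℝ) × (n → ℝ) →ₗ[ℝ] ℝ) :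
    ∃ a b : n → ℝ, ∀ z, φ z = a ⬝ᵥ z.1 + b ⬝ᵥ z.2 := by
  classical
  refine ⟨fun j => φ (Pi.single j 1, 0), fun j => φ (0, Pi.single j 1), fun z => ?_⟩
  have h₁ := LinearMap.pi_apply_eq_sum_univ (φ ∘ₗ LinearMap.inl ℝ (n → ℝ) (n → ℝ)) z.1
  have h₂ := LinearMap.pi_apply_eq_sum_univ (φ ∘ₗ LinearMap.inr ℝ (n → ℝ) (n → ℝ)) z.2
  have hsingle (i : n) : (fun j => if i = j then (1 : ℝ) else 0) = Pi.single i 1 :=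
    funext fun j => by simp [Pi.single_apply, eq_comm]
  simp only [LinearMap.comp_apply, LinearMap.inl_apply, LinearMap.inr_apply, hsingle] at h₁ h₂
  rw [← Prod.fst_add_snd z, map_add, h₁, h₂]
  simp [dotProduct, mul_comm]

variable [TopologicalSpace E]

theorem isCompact_convexJoin [ContinuousAdd E] [ContinuousSMul ℝ E] {K L : Set E}
    (hK : IsCompact K) (hL : IsCompact L) : IsCompact (convexJoin ℝ K L) := by
  have : convexJoin ℝ K L =
      (fun z : ℝ × E × E => (1 - z.1) • z.2.1 + z.1 • z.2.2) '' (Set.Icc 0 1 ×ˢ K ×ˢ L) := by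
    ext x
    simp only [mem_convexJoin, segment_eq_image, Set.mem_image, Set.mem_prod, Prod.exists]
    constructor
    · rintro ⟨a, ha, b, hb, θ, hθ, rfl⟩
      exact ⟨θ, a, b, ⟨hθ, ha, hb⟩, rfl⟩
    · rintro ⟨θ, a, b, ⟨hθ, ha, hb⟩, rfl⟩
      exact ⟨a, ha, b, hb, θ, hθ, rfl⟩
  rw [this]
  exact (isCompact_Icc.prod (hK.prod hL)).image (by fun_prop)

theorem isCompact_convexHull_biUnion [ContinuousAdd E] [ContinuousSMul ℝ E] {ι : Type*}
    (s : Finset ι) {K : ι → Set E} (hc : ∀ i, IsCompact (K i)) (hv : ∀ i, Convex ℝ (K i))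
    (hn : ∀ i, (K i).Nonempty) : IsCompact (convexHull ℝ (⋃ i ∈ s, K i)) := by
  classical
  induction s using Finset.induction_on with
  | empty => simp
  | insert a s _ ih =>
    rw [Finset.set_biUnion_insert]
    rcases s.eq_empty_or_nonempty with rfl | ⟨i, hi⟩
    · simpa [(hv a).convexHull_eq] using hc a
    obtain ⟨y, hy⟩ := hn i
    rw [← convexHull_convexHull_union_right, (hv a).convexHull_union (convex_convexHull ℝ _)
      (hn a) ⟨y, subset_convexHull ℝ _ (Set.mem_iUnion₂.2 ⟨i, hi, hy⟩)⟩]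
    exact isCompact_convexJoin (hc a) ih

theorem subset_closedConvexHull_of_forall_exists_le [IsTopologicalAddGroup E]
    [ContinuousSMul ℝ E] [LocallyConvexSpace ℝ E] {s C : Set E}
    (h : ∀ φ : E →L[ℝ] ℝ, ∀ x ∈ s, ∃ y ∈ C, φ x ≤ φ y) : s ⊆ closedConvexHull ℝ C := by
  intro x hx
  by_contra hxC
  obtain ⟨φ, u, hφ, hu⟩ :=
    geometric_hahn_banach_closed_point convex_closedConvexHull isClosed_closedConvexHull hxC
  obtain ⟨y, hy, hxy⟩ := h φ x hx
  linarith [hφ y (subset_closedConvexHull hy)]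

end ConvexGeometry

instance {m n : Type*} [Fintype m] [Fintype n] : LocallyConvexSpace ℝ (Matrix m n ℝ) :=
  inferInstanceAs (LocallyConvexSpace ℝ (m → n → ℝ))

section Factorization

def outputs {m n : Type*} [Fintype n] (p q : n → ℝ) : Matrix m n ℝ →ₗ[ℝ] (m → ℝ) × (m → ℝ) where
  toFun S := (S *ᵥ p, S *ᵥ q)
  map_add' S S' := by simp [Matrix.add_mulVec]
  map_smul' c S := by simp [Matrix.smul_mulVec]

theorem outputs_mul {m n o : Type*} [Fintype n] [Fintype o] (p q : o → ℝ) (S : Matrix m n ℝ)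
    (D : Matrix n o ℝ) : outputs p q (S * D) = outputs (D *ᵥ p) (D *ᵥ q) S := by
  simp [outputs, Matrix.mulVec_mulVec]

variable {k ℓ : ℕ} {γ ν : Fin ℓ → ℝ} {p q : Fin k → ℝ}

theorem exists_threshold_of_mem_extremePoints (hk : 0 < k) (hl : 0 < ℓ) (hγ : ∀ j, 0 ≤ γ j)
    (hp : ∀ i, 0 ≤ p i) (hq : ∀ i, 0 ≤ q i) (hpq : ∀ i, 0 < p i + q i)
    {z : (Fin ℓ → ℝ) × (Fin ℓ → ℝ)}
    (hz : z ∈ (outputs p q '' {S : Matrix (Fin ℓ) (Fin k) ℝ | IsLP γ ν S}).extremePoints ℝ) :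
    ∃ f : Fin k → Fin (2 * ℓ ^ 2), IsThresholdChannel p q (detChannel f) ∧
      ∃ S₂ : Matrix (Fin ℓ) (Fin (2 * ℓ ^ 2)) ℝ, IsLP γ ν S₂ ∧
        outputs p q (S₂ * detChannel f) = z := by
  set A := outputs p q '' {S : Matrix (Fin ℓ) (Fin k) ℝ | IsLP γ ν S}
  set LP := {S₂ : Matrix (Fin ℓ) (Fin (2 * ℓ ^ 2)) ℝ | IsLP γ ν S₂}
  set C := ⋃ f ∈ univ.filter fun f : Fin k → Fin (2 * ℓ ^ 2) =>
      IsThresholdChannel p q (detChannel f),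
    outputs (detChannel f *ᵥ p) (detChannel f *ᵥ q) '' LP
  have hCA : C ⊆ A := by
    simp only [C, Set.iUnion_subset_iff]
    rintro f - _ ⟨S₂, hS₂, rfl⟩
    exact ⟨_, hS₂.mul_detChannel f, outputs_mul ..⟩
  obtain ⟨S, hS, -⟩ := extremePoints_subset hz
  have hLP : LP.Nonempty := ⟨S * detChannel fun _ => ⟨0, hk⟩, hS.mul_detChannel _⟩
  have hhull : IsCompact (convexHull ℝ C) :=
    isCompact_convexHull_biUnion _
      (fun f => isCompact_setOf_isLP.image (LinearMap.continuous_of_finiteDimensional _))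
      (fun f => convex_setOf_isLP.linear_image _) (fun f => hLP.image _)
  -- Hahn–Banach: every linear functional is maximised over `A` at a point of `C`
  have hAC : A ⊆ convexHull ℝ C := by
    rw [← hhull.isClosed.closure_eq, ← closedConvexHull_eq_closure_convexHull]
    refine subset_closedConvexHull_of_forall_exists_le fun φ => ?_
    obtain ⟨a, b, hab⟩ := exists_dotProduct_eq φ.toLinearMap
    rintro _ ⟨S, hS, rfl⟩
    obtain ⟨f, hf, S₂, hS₂, hle⟩ := exists_threshold_objective_le hk hl hγ hp hq hpq a b hS
    refine ⟨outputs p q (S₂ * detChannel f), ?_, ?_⟩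
    · exact Set.mem_iUnion₂.2 ⟨f, by simpa using hf, S₂, hS₂, (outputs_mul ..).symm⟩
    · change φ.toLinearMap _ ≤ φ.toLinearMap _
      rw [hab, hab]
      exact hle
  have hAeq : A = convexHull ℝ C :=
    hAC.antisymm (convexHull_min hCA (convex_setOf_isLP.linear_image _))
  rw [hAeq] at hz
  obtain ⟨f, hf, S₂, hS₂, hS₂z⟩ := Set.mem_iUnion₂.1 (extremePoints_convexHull_subset hz)
  exact ⟨f, by simpa using hf, S₂, hS₂, (outputs_mul ..).trans hS₂z⟩

end Factorization

theorem stmt13_general (k ℓ : ℕ) (γ ν : Fin ℓ → ℝ) (hγ : ∀ j, 0 ≤ γ j)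
    (p q : Fin k → ℝ) (hp : IsDist p) (hq : IsDist q) (hpq : ∀ i, 0 < p i + q i)
    (A : Set ((Fin ℓ → ℝ) × (Fin ℓ → ℝ)))
    (hA : A = {z | ∃ S : Matrix (Fin ℓ) (Fin k) ℝ,
        IsLP γ ν S ∧ z = (S.mulVec p, S.mulVec q)})
    (T : Matrix (Fin ℓ) (Fin k) ℝ) (hT : IsLP γ ν T)
    (hext : (T.mulVec p, T.mulVec q) ∈ A.extremePoints ℝ) :
    ∃ (T₁ : Matrix (Fin (2 * ℓ ^ 2)) (Fin k) ℝ)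
      (T₂ : Matrix (Fin ℓ) (Fin (2 * ℓ ^ 2)) ℝ),
      IsThresholdChannel p q T₁ ∧
      T₂ ∈ ({S : Matrix (Fin ℓ) (Fin (2 * ℓ ^ 2)) ℝ | IsLP γ ν S}).extremePoints ℝ ∧
      (T.mulVec p, T.mulVec q) = ((T₂ * T₁).mulVec p, (T₂ * T₁).mulVec q) := by
  have hk : 0 < k := Nat.pos_of_ne_zero fun h => by subst h; simpa using hp.2
  have hl : 0 < ℓ := Nat.pos_of_ne_zero fun h => by subst h; simpa using hT.1.2 ⟨0, hk⟩
  have hA' : A = outputs p q '' {S | IsLP γ ν S} := by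
    rw [hA]; ext z; simp [outputs, eq_comm]
  rw [hA'] at hext
  obtain ⟨f, hf, S₂, hS₂, hz⟩ := exists_threshold_of_mem_extremePoints hk hl hγ hp.1 hq.1 hpq hext
  set L : Matrix (Fin ℓ) (Fin (2 * ℓ ^ 2)) ℝ →ₗ[ℝ] _ :=
    outputs ((detChannel f).mulVec p) ((detChannel f).mulVec q)
  have hL (S : Matrix (Fin ℓ) (Fin (2 * ℓ ^ 2)) ℝ) : L S = outputs p q (S * detChannel f) :=
    (outputs_mul p q S (detChannel f)).symm
  have hmaps : Set.MapsTo L {S | IsLP γ ν S} (outputs p q '' {S | IsLP γ ν S}) :=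
    fun S hS => ⟨S * detChannel f, hS.mul_detChannel f, (hL S).symm⟩
  have hfiber : IsCompact ({S | IsLP γ ν S} ∩ L ⁻¹' {outputs p q T}) :=
    isCompact_setOf_isLP.inter_right
      (isClosed_singleton.preimage (LinearMap.continuous_of_finiteDimensional L))
  obtain ⟨T₂, hT₂⟩ := hfiber.extremePoints_nonempty ⟨S₂, hS₂, (hL S₂).trans hz⟩
  refine ⟨detChannel f, T₂, hf, extremePoints_inter_preimage_subset L hmaps hext hT₂, ?_⟩
  exact ((hL T₂).symm.trans (extremePoints_subset hT₂).2).symm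

/-- Structure of optimal channels for the LP family: any extreme point of the joint range
decomposes as a threshold channel into `[2ℓ²]` followed by an extreme LP channel. -/
theorem stmt13 (k ℓ : ℕ) (γ ν : Fin ℓ → ℝ) (hγ : ∀ j, 0 ≤ γ j) (hν : ∀ j, 0 ≤ ν j)
    (p q : Fin k → ℝ) (hp : IsDist p) (hq : IsDist q) (hpq : ∀ i, 0 < p i + q i)
    (A : Set ((Fin ℓ → ℝ) × (Fin ℓ → ℝ)))
    (hA : A = {z | ∃ S : Matrix (Fin ℓ) (Fin k) ℝ,
        IsLP γ ν S ∧ z = (S.mulVec p, S.mulVec q)})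
    (T : Matrix (Fin ℓ) (Fin k) ℝ) (hT : IsLP γ ν T)
    (hext : (T.mulVec p, T.mulVec q) ∈ A.extremePoints ℝ) :
    ∃ (T₁ : Matrix (Fin (2 * ℓ ^ 2)) (Fin k) ℝ)
      (T₂ : Matrix (Fin ℓ) (Fin (2 * ℓ ^ 2)) ℝ),
      IsThresholdChannel p q T₁ ∧
      T₂ ∈ ({S : Matrix (Fin ℓ) (Fin (2 * ℓ ^ 2)) ℝ | IsLP γ ν S}).extremePoints ℝ ∧
      (T.mulVec p, T.mulVec q) = ((T₂ * T₁).mulVec p, (T₂ * T₁).mulVec q) :=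
  stmt13_general k ℓ γ ν hγ p q hp hq hpq A hA T hT hext
end
end

section
/- Let γ, ν ∈ ℝ^ℓ be nonnegative vectors and let T be an extreme point of the convex set J^{γ,ν}_{ℓ,k}. For each row r ∈ [ℓ], let m_r and M_r denote the minimum and maximum entries of row r of T. Then for every column c ∈ [k] there is at most one row r ∈ [ℓ] with T(r,c) ∉ {m_r, M_r}. -/
open scoped Classical ENNReal
open Finset

noncomputable section

/-! If two entries of column `c`, in rows `r ≠ r'`, lie strictly between their row's minimum and
maximum, moving mass `t` from `(r', c)` to `(r, c)` keeps column sums and, for small `|t|`, keeps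
every row inside its old range `[m, M]`. Since `M ≤ γ m + ν`, the LP constraints survive, so `T` is
the midpoint of two points of the family and cannot be extreme. -/

open Filter Topology Set

theorem eq_zero_of_eventually_add_smul_mem {E : Type*} [AddCommGroup E] [Module ℝ E]
    {A : Set E} {x v : E} (hx : x ∈ A.extremePoints ℝ)
    (h : ∀ᶠ t in 𝓝 (0 : ℝ), x + t • v ∈ A) : v = 0 := by
  obtain ⟨ε, hε, hA⟩ := Metric.eventually_nhds_iff.1 h
  have hhalf : |ε| / 2 < ε := by rw [abs_of_pos hε]; linarith
  have hplus : x + (ε / 2) • v ∈ A := hA (by simpa using hhalf)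
  have hminus : x + (-(ε / 2)) • v ∈ A := hA (by simpa using hhalf)
  have hseg : x ∈ openSegment ℝ (x + (ε / 2) • v) (x + (-(ε / 2)) • v) :=
    ⟨1 / 2, 1 / 2, by norm_num, by norm_num, by norm_num, by module⟩
  simpa [hε.ne'] using hx.2 hplus hminus hseg

theorem eventually_add_mem_Icc {a b x : ℝ} (ha : a < x) (hb : x < b) :
    ∀ᶠ t in 𝓝 (0 : ℝ), x + t ∈ Icc a b :=
  ((continuous_const.add continuous_id).tendsto' 0 x (add_zero x)).eventually (Icc_mem_nhds ha hb)

theorem eventually_sub_mem_Icc {a b x : ℝ} (ha : a < x) (hb : x < b) :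
    ∀ᶠ t in 𝓝 (0 : ℝ), x - t ∈ Icc a b :=
  ((continuous_const.sub continuous_id).tendsto' 0 x (sub_zero x)).eventually (Icc_mem_nhds ha hb)

section RowExtrema

variable {ℓ k : ℕ} {γ ν : Fin ℓ → ℝ} {S T : Matrix (Fin ℓ) (Fin k) ℝ}

theorem rowMin_le (T : Matrix (Fin ℓ) (Fin k) ℝ) (r : Fin ℓ) (c : Fin k) : rowMin T r ≤ T r c :=
  csInf_le (finite_range _).bddBelow ⟨c, rfl⟩

theorem le_rowMax (T : Matrix (Fin ℓ) (Fin k) ℝ) (r : Fin ℓ) (c : Fin k) : T r c ≤ rowMax T r :=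
  le_csSup (finite_range _).bddAbove ⟨c, rfl⟩

theorem exists_eq_rowMin [Nonempty (Fin k)] (T : Matrix (Fin ℓ) (Fin k) ℝ) (r : Fin ℓ) :
    ∃ c, T r c = rowMin T r :=
  (range_nonempty _).csInf_mem (finite_range _)

theorem exists_eq_rowMax [Nonempty (Fin k)] (T : Matrix (Fin ℓ) (Fin k) ℝ) (r : Fin ℓ) :
    ∃ c, T r c = rowMax T r :=
  (range_nonempty _).csSup_mem (finite_range _)

theorem rowMin_nonneg (hT : ∀ r c, 0 ≤ T r c) (r : Fin ℓ) : 0 ≤ rowMin T r :=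
  Real.sInf_nonneg (by rintro _ ⟨c, rfl⟩; exact hT r c)

theorem IsLP.rowMax_le [Nonempty (Fin k)] (hT : IsLP γ ν T) (r : Fin ℓ) :
    rowMax T r ≤ γ r * rowMin T r + ν r := by
  obtain ⟨cMax, hMax⟩ := exists_eq_rowMax T r
  obtain ⟨cMin, hMin⟩ := exists_eq_rowMin T r
  rw [← hMax, ← hMin]
  exact hT.2 r cMax cMin

theorem IsLP.of_mem_Icc (hγ : ∀ j, 0 ≤ γ j) (hT : IsLP γ ν T) (hS : ∀ c, ∑ r, S r c = 1)
    (hST : ∀ r c, S r c ∈ Icc (rowMin T r) (rowMax T r)) : IsLP γ ν S := by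
  refine ⟨⟨fun r c => (rowMin_nonneg hT.1.1 r).trans (hST r c).1, hS⟩, fun j i i' => ?_⟩
  have : Nonempty (Fin k) := ⟨i⟩
  calc S j i ≤ rowMax T j := (hST j i).2
    _ ≤ γ j * rowMin T j + ν j := hT.rowMax_le j
    _ ≤ γ j * S j i' + ν j := by have := hγ j; gcongr; exact (hST j i').1

theorem isLP_add_smul_single_sub_single (hγ : ∀ j, 0 ≤ γ j) (hT : IsLP γ ν T) {r r' : Fin ℓ}
    (hne : r ≠ r') {c : Fin k} {t : ℝ} (hr : T r c + t ∈ Icc (rowMin T r) (rowMax T r))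
    (hr' : T r' c - t ∈ Icc (rowMin T r') (rowMax T r')) :
    IsLP γ ν (T + t • (Matrix.single r c 1 - Matrix.single r' c 1)) := by
  refine hT.of_mem_Icc hγ (fun j => ?_) (fun i j => ?_)
  · rcases eq_or_ne c j with rfl | hcj
    · simp [Matrix.single_apply, Finset.sum_add_distrib, ← Finset.mul_sum, hT.1.2 c]
    · simp [hcj, hT.1.2 j]
  · simp only [Matrix.add_apply, Matrix.smul_apply, Matrix.sub_apply, Matrix.single_apply,
      smul_eq_mul]
    split_ifs with h h' h'
    · exact absurd (h.1.trans h'.1.symm) hne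
    · obtain ⟨rfl, rfl⟩ := h
      simpa using hr
    · obtain ⟨rfl, rfl⟩ := h'
      simpa [sub_eq_add_neg] using hr'
    · simpa using ⟨rowMin_le T i j, le_rowMax T i j⟩

end RowExtrema

theorem stmt14_general (k ℓ : ℕ) (γ ν : Fin ℓ → ℝ) (hγ : ∀ j, 0 ≤ γ j)
    (T : Matrix (Fin ℓ) (Fin k) ℝ)
    (hT : T ∈ ({S : Matrix (Fin ℓ) (Fin k) ℝ | IsLP γ ν S}).extremePoints ℝ) :
    ∀ c : Fin k, ∀ r r' : Fin ℓ,
      T r c ≠ rowMin T r → T r c ≠ rowMax T r →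
      T r' c ≠ rowMin T r' → T r' c ≠ rowMax T r' → r = r' := by
  intro c r r' hMin hMax hMin' hMax'
  by_contra hne
  have hperturb : ∀ᶠ t in 𝓝 (0 : ℝ),
      IsLP γ ν (T + t • (Matrix.single r c 1 - Matrix.single r' c 1)) := by
    filter_upwards [eventually_add_mem_Icc ((rowMin_le T r c).lt_of_ne' hMin)
        ((le_rowMax T r c).lt_of_ne hMax),
      eventually_sub_mem_Icc ((rowMin_le T r' c).lt_of_ne' hMin')
        ((le_rowMax T r' c).lt_of_ne hMax')] with t hr hr'
    exact isLP_add_smul_single_sub_single hγ hT.1 hne hr hr'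
  have hzero := congrFun₂ (eq_zero_of_eventually_add_smul_mem hT hperturb) r c
  simp [Matrix.single_apply_of_row_ne (Ne.symm hne)] at hzero

/-- An extreme point of the LP family has at most one free entry per column:
in each column, at most one row's entry differs from both the row minimum and maximum. -/
theorem stmt14 (k ℓ : ℕ) (γ ν : Fin ℓ → ℝ) (hγ : ∀ j, 0 ≤ γ j) (hν : ∀ j, 0 ≤ ν j)
    (T : Matrix (Fin ℓ) (Fin k) ℝ)
    (hT : T ∈ ({S : Matrix (Fin ℓ) (Fin k) ℝ | IsLP γ ν S}).extremePoints ℝ) :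
    ∀ c : Fin k, ∀ r r' : Fin ℓ,
      T r c ≠ rowMin T r → T r c ≠ rowMax T r →
      T r' c ≠ rowMin T r' → T r' c ≠ rowMax T r' → r = r' :=
  stmt14_general k ℓ γ ν hγ T hT
end
end

section
/- Let γ, ν ∈ ℝ^ℓ be nonnegative vectors. Then J^{γ,ν}_{ℓ,k} equals the union over ℓ' ∈ {1, …, k} of the sets {T₂·T₁ : T₂ ∈ J^{γ,ν}_{ℓ,ℓ'}, T₁ ∈ T_{ℓ',k}}, where T₂·T₁ denotes the matrix product. In particular, for every ℓ' ≥ 1, every T₁ ∈ T_{ℓ',k}, and every T₂ ∈ J^{γ,ν}_{ℓ,ℓ'}, the product T₂·T₁ belongs to J^{γ,ν}_{ℓ,k}. -/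
open scoped Classical ENNReal
open Finset

noncomputable section

lemma comp_lp {k ℓ ℓ' : ℕ} (γ ν : Fin ℓ → ℝ) (hγ : ∀ j, 0 ≤ γ j) (hν : ∀ j, 0 ≤ ν j)
    (T₁ : Matrix (Fin ℓ') (Fin k) ℝ) (T₂ : Matrix (Fin ℓ) (Fin ℓ') ℝ)
    (h1 : IsChannel T₁) (h2 : IsLP γ ν T₂) : IsLP γ ν (T₂ * T₁) := by
  obtain ⟨h1n, h1s⟩ := h1
  obtain ⟨⟨h2n, h2s⟩, h2lp⟩ := h2
  refine ⟨⟨fun r c => ?_, fun c => ?_⟩, ?_⟩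
  · rw [Matrix.mul_apply]
    exact Finset.sum_nonneg fun m _ => mul_nonneg (h2n r m) (h1n m c)
  · simp only [Matrix.mul_apply]
    rw [Finset.sum_comm]
    calc ∑ m, ∑ r, T₂ r m * T₁ m c = ∑ m, T₁ m c := by
          refine Finset.sum_congr rfl fun m _ => ?_
          rw [← Finset.sum_mul, h2s m, one_mul]
      _ = 1 := h1s c
  · intro j i i'
    have key : ∀ m, T₂ j m ≤ γ j * (T₂ * T₁) j i' + ν j := by
      intro m
      have : T₂ j m = ∑ m', T₁ m' i' * T₂ j m := by
        rw [← Finset.sum_mul, h1s i', one_mul]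
      rw [this]
      have hb : ∀ m', T₁ m' i' * T₂ j m ≤ T₁ m' i' * (γ j * T₂ j m' + ν j) := fun m' =>
        mul_le_mul_of_nonneg_left (h2lp j m m') (h1n m' i')
      calc ∑ m', T₁ m' i' * T₂ j m ≤ ∑ m', T₁ m' i' * (γ j * T₂ j m' + ν j) :=
            Finset.sum_le_sum fun m' _ => hb m'
        _ = γ j * (T₂ * T₁) j i' + ν j := by
            have hn : ∑ m' : Fin ℓ', T₁ m' i' * ν j = ν j := by
              rw [← Finset.sum_mul, h1s i', one_mul]
            simp only [Matrix.mul_apply, mul_add, Finset.sum_add_distrib, hn, Finset.mul_sum]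
            congr 1
            exact Finset.sum_congr rfl fun m' _ => by ring
    calc (T₂ * T₁) j i = ∑ m, T₂ j m * T₁ m i := Matrix.mul_apply
      _ ≤ ∑ m, (γ j * (T₂ * T₁) j i' + ν j) * T₁ m i :=
          Finset.sum_le_sum fun m _ => mul_le_mul_of_nonneg_right (key m) (h1n m i)
      _ = γ j * (T₂ * T₁) j i' + ν j := by rw [← Finset.mul_sum, h1s i, mul_one]

/-- Closure of the LP family under pre-processing: `J^{γ,ν}_{ℓ,k}` equals the union over
`ℓ' ∈ {1,…,k}` of compositions of an arbitrary channel `[k] → [ℓ']` with an LP channel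
`[ℓ'] → [ℓ]`; in particular any such composition is an LP channel. -/
theorem stmt16 (k ℓ : ℕ) (hk : 1 ≤ k) (γ ν : Fin ℓ → ℝ)
    (hγ : ∀ j, 0 ≤ γ j) (hν : ∀ j, 0 ≤ ν j) :
    (({T | IsLP γ ν T} : Set (Matrix (Fin ℓ) (Fin k) ℝ)) =
      ⋃ ℓ' ∈ Set.Icc 1 k,
        {T | ∃ (T₂ : Matrix (Fin ℓ) (Fin ℓ') ℝ) (T₁ : Matrix (Fin ℓ') (Fin k) ℝ),
          IsLP γ ν T₂ ∧ IsChannel T₁ ∧ T = T₂ * T₁}) ∧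
    ∀ ℓ' : ℕ, 1 ≤ ℓ' →
      ∀ (T₁ : Matrix (Fin ℓ') (Fin k) ℝ) (T₂ : Matrix (Fin ℓ) (Fin ℓ') ℝ),
        IsChannel T₁ → IsLP γ ν T₂ → IsLP γ ν (T₂ * T₁) := by
  constructor
  · ext T
    simp only [Set.mem_setOf_eq, Set.mem_iUnion]
    constructor
    · intro hT
      refine ⟨k, ⟨hk, le_refl k⟩, T, 1, hT, ⟨fun r c => ?_, fun c => ?_⟩, (Matrix.mul_one T).symm⟩
      · by_cases h : r = c <;> simp [Matrix.one_apply, h]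
      · simp [Matrix.one_apply, Finset.sum_ite_eq]
    · rintro ⟨ℓ', ⟨hℓ'1, _⟩, T₂, T₁, h2, h1, rfl⟩
      exact comp_lp γ ν hγ hν T₁ T₂ h1 h2
  · intro ℓ' _ T₁ T₂ h1 h2
    exact comp_lp γ ν hγ hν T₁ T₂ h1 h2
end
end

section
/- Let p, q be distributions on [k], let f : [k] → [k'] be a function such that p_i·q_j = p_j·q_i whenever f(i) = f(j), and let T_f ∈ T_{k',k} be the deterministic channel induced by f. Set p' := T_f p and q' := T_f q. Then for every ℓ ≥ 1: (a) {(Tp, Tq) : T ∈ T_{ℓ,k}} = {(T'p', T'q') : T' ∈ T_{ℓ,k'}}; and (b) for every ε > 0, {(Tp, Tq) : T ∈ P^ε_{ℓ,k}} = {(T'p', T'q') : T' ∈ P^ε_{ℓ,k'}}. -/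
open scoped Classical ENNReal
open Finset

noncomputable section

lemma detChannel_isChannel {k k' : ℕ} (f : Fin k → Fin k') : IsChannel (detChannel f) := by
  constructor
  · intro r c; unfold detChannel; split <;> norm_num
  · intro c; simp [detChannel]

lemma channel_mul {ℓ k k' : ℕ} {A : Matrix (Fin ℓ) (Fin k) ℝ} {B : Matrix (Fin k) (Fin k') ℝ}
    (hA : IsChannel A) (hB : IsChannel B) : IsChannel (A * B) := by
  constructor
  · intro r c
    rw [Matrix.mul_apply]
    exact Finset.sum_nonneg fun i _ => mul_nonneg (hA.1 r i) (hB.1 i c)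
  · intro c
    simp only [Matrix.mul_apply]
    rw [Finset.sum_comm]
    calc ∑ i, ∑ r, A r i * B i c = ∑ i, B i c := by
          refine Finset.sum_congr rfl fun i _ => ?_
          rw [← Finset.sum_mul, hA.2 i, one_mul]
      _ = 1 := hB.2 c

lemma ldp_mul {ℓ k k' : ℕ} {ε : ℝ} {A : Matrix (Fin ℓ) (Fin k) ℝ} {B : Matrix (Fin k) (Fin k') ℝ}
    (hA : IsLDP ε A) (hB : IsChannel B) : IsLDP ε (A * B) := by
  refine ⟨channel_mul hA.1 hB, fun r c c' => ?_⟩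
  have key : ∀ j, (A * B) r c ≤ Real.exp ε * A r j := by
    intro j
    calc (A * B) r c = ∑ i, A r i * B i c := Matrix.mul_apply
      _ ≤ ∑ i, (Real.exp ε * A r j) * B i c := by
          refine Finset.sum_le_sum fun i _ => ?_
          exact mul_le_mul_of_nonneg_right (hA.2 r i j) (hB.1 i c)
      _ = Real.exp ε * A r j := by rw [← Finset.mul_sum, hB.2 c, mul_one]
  calc (A * B) r c = ∑ j, (A * B) r c * B j c' := by
        rw [← Finset.mul_sum, hB.2 c', mul_one]
    _ ≤ ∑ j, (Real.exp ε * A r j) * B j c' := by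
        refine Finset.sum_le_sum fun j _ => ?_
        exact mul_le_mul_of_nonneg_right (key j) (hB.1 j c')
    _ = Real.exp ε * (A * B) r c' := by
        rw [Matrix.mul_apply, Finset.mul_sum]
        exact Finset.sum_congr rfl fun j _ => by ring

/-- splitting channel -/
def mergeW {k k' : ℕ} (s : Fin k → ℝ) (f : Fin k → Fin k') (i₀ : Fin k) :
    Matrix (Fin k) (Fin k') ℝ :=
  fun i c' => if (∑ j ∈ univ.filter (fun j => f j = c'), s j) = 0 then
      (if i = i₀ then 1 else 0)
    else if f i = c' then s i / (∑ j ∈ univ.filter (fun j => f j = c'), s j) else 0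

lemma mergeW_channel {k k' : ℕ} (s : Fin k → ℝ) (f : Fin k → Fin k') (i₀ : Fin k)
    (hs : ∀ i, 0 ≤ s i) : IsChannel (mergeW s f i₀) := by
  constructor
  · intro i c'
    unfold mergeW
    split
    · split <;> norm_num
    · split
      · exact div_nonneg (hs i) (Finset.sum_nonneg fun j _ => hs j)
      · exact le_refl 0
  · intro c'
    unfold mergeW
    by_cases hS : (∑ j ∈ univ.filter (fun j => f j = c'), s j) = 0
    · simp [hS]
    · simp only [hS, if_false]
      rw [← Finset.sum_filter]
      rw [← Finset.sum_div, div_self hS]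

lemma detChannel_mulVec {k k' : ℕ} (f : Fin k → Fin k') (p : Fin k → ℝ) (c' : Fin k') :
    (detChannel f).mulVec p c' = ∑ j ∈ univ.filter (fun j => f j = c'), p j := by
  unfold detChannel Matrix.mulVec dotProduct
  rw [Finset.sum_filter]
  refine Finset.sum_congr rfl fun j _ => ?_
  by_cases h : c' = f j
  · simp [h]
  · simp [h, Ne.symm h]

lemma mergeW_mulVec {k k' : ℕ} (s p : Fin k → ℝ) (f : Fin k → Fin k') (i₀ : Fin k)
    (hp0 : ∀ i, 0 ≤ p i) (hps : ∀ i, p i ≤ s i) (hs0 : ∀ i, 0 ≤ s i)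
    (key : ∀ i j, f i = f j → p i * s j = p j * s i) :
    (mergeW s f i₀).mulVec ((detChannel f).mulVec p) = p := by
  funext i
  have hrepr : (mergeW s f i₀).mulVec ((detChannel f).mulVec p) i
      = ∑ c', mergeW s f i₀ i c' * (detChannel f).mulVec p c' := rfl
  rw [hrepr]
  have hterm : ∀ c', mergeW s f i₀ i c' * (detChannel f).mulVec p c'
      = if c' = f i then p i else 0 := by
    intro c'
    rw [detChannel_mulVec]
    set S := ∑ j ∈ univ.filter (fun j => f j = c'), s j with hSdef
    by_cases hS : S = 0
    · have hz : ∀ j, f j = c' → p j = 0 := by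
        intro j hj
        have hsj : s j = 0 := by
          have := Finset.sum_eq_zero_iff_of_nonneg (fun j _ => hs0 j) |>.mp hS j
            (by simp [hj])
          exact this
        exact le_antisymm (hsj ▸ hps j) (hp0 j)
      have hP : (∑ j ∈ univ.filter (fun j => f j = c'), p j) = 0 :=
        Finset.sum_eq_zero fun j hj => hz j (by simpa using hj)
      rw [hP, mul_zero]
      split
      · next h => rw [hz i h.symm]
      · rfl
    · unfold mergeW
      rw [← hSdef]
      simp only [hS, if_false]
      by_cases hfi : f i = c'
      · rw [if_pos hfi, if_pos hfi.symm]
        have hP : s i * (∑ j ∈ univ.filter (fun j => f j = c'), p j) = p i * S := by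
          rw [hSdef, Finset.mul_sum, Finset.mul_sum]
          refine Finset.sum_congr rfl fun j hj => ?_
          have hfj : f j = c' := by simpa using hj
          have := key i j (hfi.trans hfj.symm)
          linarith [this]
        field_simp
        linarith [hP]
      · rw [if_neg hfi, zero_mul, if_neg (fun hc => hfi hc.symm)]
  rw [Finset.sum_congr rfl fun c' _ => hterm c']
  simp

/-- Merging elements with equal likelihood ratios preserves the joint range, both under
communication constraints only and under `ε`-LDP constraints. -/
theorem stmt19 (k k' : ℕ) (p q : Fin k → ℝ) (hp : IsDist p) (hq : IsDist q)
    (f : Fin k → Fin k') (hf : ∀ i j, f i = f j → p i * q j = p j * q i)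
    (ℓ : ℕ) (hℓ : 1 ≤ ℓ) :
    (({z | ∃ T : Matrix (Fin ℓ) (Fin k) ℝ,
        IsChannel T ∧ z = (T.mulVec p, T.mulVec q)} :
          Set ((Fin ℓ → ℝ) × (Fin ℓ → ℝ))) =
      {z | ∃ T' : Matrix (Fin ℓ) (Fin k') ℝ, IsChannel T' ∧
        z = (T'.mulVec ((detChannel f).mulVec p),
             T'.mulVec ((detChannel f).mulVec q))}) ∧
    ∀ ε : ℝ, 0 < ε →
      (({z | ∃ T : Matrix (Fin ℓ) (Fin k) ℝ,
          IsLDP ε T ∧ z = (T.mulVec p, T.mulVec q)} :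
            Set ((Fin ℓ → ℝ) × (Fin ℓ → ℝ))) =
        {z | ∃ T' : Matrix (Fin ℓ) (Fin k') ℝ, IsLDP ε T' ∧
          z = (T'.mulVec ((detChannel f).mulVec p),
               T'.mulVec ((detChannel f).mulVec q))}) := by
  have hk : k ≠ 0 := by
    rintro rfl
    simpa using hp.2
  set i₀ : Fin k := ⟨0, Nat.pos_of_ne_zero hk⟩ with hi₀
  set s : Fin k → ℝ := fun i => p i + q i with hsdef
  have hs0 : ∀ i, 0 ≤ s i := fun i => add_nonneg (hp.1 i) (hq.1 i)
  set W : Matrix (Fin k) (Fin k') ℝ := mergeW s f i₀ with hWdef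
  have hW : IsChannel W := mergeW_channel s f i₀ hs0
  have hWp : W.mulVec ((detChannel f).mulVec p) = p := by
    refine mergeW_mulVec s p f i₀ hp.1 (fun i => le_add_of_nonneg_right (hq.1 i)) hs0 ?_
    intro i j hij
    have := hf i j hij
    simp only [hsdef]
    ring_nf
    linarith
  have hWq : W.mulVec ((detChannel f).mulVec q) = q := by
    refine mergeW_mulVec s q f i₀ hq.1 (fun i => le_add_of_nonneg_left (hp.1 i)) hs0 ?_
    intro i j hij
    have := hf i j hij
    simp only [hsdef]
    ring_nf
    linarith
  constructor
  · ext z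
    simp only [Set.mem_setOf_eq]
    constructor
    · rintro ⟨T, hT, rfl⟩
      refine ⟨T * W, channel_mul hT hW, ?_⟩
      rw [show (T * W).mulVec ((detChannel f).mulVec p) = T.mulVec p by
            rw [← Matrix.mulVec_mulVec, hWp],
          show (T * W).mulVec ((detChannel f).mulVec q) = T.mulVec q by
            rw [← Matrix.mulVec_mulVec, hWq]]
    · rintro ⟨T', hT', rfl⟩
      refine ⟨T' * detChannel f, channel_mul hT' (detChannel_isChannel f), ?_⟩
      rw [Matrix.mulVec_mulVec, Matrix.mulVec_mulVec]
  · intro ε _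
    ext z
    simp only [Set.mem_setOf_eq]
    constructor
    · rintro ⟨T, hT, rfl⟩
      refine ⟨T * W, ldp_mul hT hW, ?_⟩
      rw [show (T * W).mulVec ((detChannel f).mulVec p) = T.mulVec p by
            rw [← Matrix.mulVec_mulVec, hWp],
          show (T * W).mulVec ((detChannel f).mulVec q) = T.mulVec q by
            rw [← Matrix.mulVec_mulVec, hWq]]
    · rintro ⟨T', hT', rfl⟩
      refine ⟨T' * detChannel f, ldp_mul hT' (detChannel_isChannel f), ?_⟩
      rw [Matrix.mulVec_mulVec, Matrix.mulVec_mulVec]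
end
end
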